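/- arXiv:1712.09938 — 2 statements merged into one kernel-verified Lean document; each statement's English description precedes it below -/
import Mathlib

section
/- Let $S = \mathbb{C}[X_1,\dots,X_N]$, $\mathfrak{m} = (X_1,\dots,X_N)$, and $d > 0$. Then $\mathfrak{m}^d$ equals the ideal generated by the maximal minors (of size $d$) of the $(d+N-1) \times d$ matrix $M$ whose $(i,j)$ entry is $X_{i-j+1}$ when $1 \leq i-j+1 \leq N$ and $0$ otherwise. -/
/-!
Every entry of `catMatrix N d` lies in `𝔪`, so its maximal minors lie in `𝔪 ^ d`. Conversely,
write a monomial of degree `d` as `X (e 0) ⋯ X (e (d - 1))` with `e` monotone and take the minor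
on the rows `e j + j`. Its diagonal term is that monomial, and every other nonzero term of its
Leibniz expansion is a monomial `∏ j, X (c j)` with `c j = e (σ j) + σ j - j` for some
permutation `σ ≠ 1`. By the rearrangement inequality `∑ j, c j ^ 2 > ∑ j, e j ^ 2`, so a descending
induction on `∑ j, e j ^ 2` (which is at most `d * (N - 1) ^ 2`) puts every monomial of
degree `d` in the ideal of maximal minors.
-/

open MvPolynomial

/-- The `(d+N-1) × d` matrix whose `(i,j)` entry (0-indexed) is `X_{i-j}` when
`0 ≤ i-j ≤ N-1` and `0` otherwise; its `j`-th column contains `X₁,…,X_N` in rows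
`j` through `j+N-1`. -/
noncomputable def catMatrix (N d : ℕ) :
    Matrix (Fin (d + N - 1)) (Fin d) (MvPolynomial (Fin N) ℂ) :=
  Matrix.of fun i j =>
    if h : (j : ℕ) ≤ (i : ℕ) ∧ (i : ℕ) - (j : ℕ) < N
    then X (⟨(i : ℕ) - (j : ℕ), h.2⟩ : Fin N) else 0

open Finset

theorem Equiv.Perm.eq_one_of_strictMono {ι : Type*} [LinearOrder ι] [WellFoundedLT ι]
    {σ : Equiv.Perm ι} (hσ : StrictMono σ) : σ = 1 := by
  ext i
  exact DFunLike.congr_fun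
    (Subsingleton.elim (StrictMono.orderIsoOfSurjective σ hσ σ.surjective) (OrderIso.refl ι)) i

section Rearrangement

variable {ι α : Type*} [Fintype ι] [LinearOrder ι] [CommRing α] [LinearOrder α]
  [IsStrictOrderedRing α] {f g : ι → α} {σ : Equiv.Perm ι}

theorem StrictMono.sum_mul_comp_perm_lt_sum_mul (hf : StrictMono f) (hg : StrictMono g)
    (hσ : σ ≠ 1) : ∑ i, f i * g (σ i) < ∑ i, f i * g i := by
  rw [(hf.monotone.monovary hg.monotone).sum_mul_comp_perm_lt_sum_mul_iff]
  refine fun hmv ↦ hσ (Equiv.Perm.eq_one_of_strictMono fun i j hij ↦ ?_)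
  by_contra! hji
  have := hmv (hg.lt_iff_lt.2 (hji.lt_of_ne (σ.injective.ne hij.ne')))
  exact (hf hij).not_ge this

theorem StrictMono.sum_sq_sub_lt_sum_sq_comp_perm_sub (hf : StrictMono f) (hg : StrictMono g)
    (hσ : σ ≠ 1) : ∑ i, (g i - f i) ^ 2 < ∑ i, (g (σ i) - f i) ^ 2 := by
  have expand : ∀ h : ι → α,
      ∑ i, (h i - f i) ^ 2 = ∑ i, h i ^ 2 + ∑ i, f i ^ 2 - 2 * ∑ i, f i * h i := by
    intro h
    rw [mul_sum, ← sum_add_distrib, ← sum_sub_distrib]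
    exact sum_congr rfl fun i _ ↦ by ring
  rw [expand g, expand (fun i ↦ g (σ i)), Equiv.sum_comp σ (g · ^ 2)]
  linarith [hf.sum_mul_comp_perm_lt_sum_mul hg hσ]

end Rearrangement

theorem Matrix.det_mem_pow_card {R n : Type*} [CommRing R] [Fintype n] [DecidableEq n]
    {I : Ideal R} {A : Matrix n n R} (hA : ∀ i j, A i j ∈ I) : A.det ∈ I ^ Fintype.card n := by
  rw [Matrix.det_apply, ← card_univ, ← prod_const]
  exact sum_mem fun σ _ ↦ Submodule.smul_of_tower_mem _ _ (Ideal.prod_mem_prod fun i _ ↦ hA _ _)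

theorem sum_val_sq_le {d N : ℕ} (c : Fin d → Fin N) : ∑ j, (c j : ℕ) ^ 2 ≤ d * (N - 1) ^ 2 :=
  calc ∑ j, (c j : ℕ) ^ 2 ≤ ∑ _j : Fin d, (N - 1) ^ 2 :=
        sum_le_sum fun j _ ↦ Nat.pow_le_pow_left (by omega) 2
    _ = d * (N - 1) ^ 2 := by simp

noncomputable def maxMinorIdeal (N d : ℕ) : Ideal (MvPolynomial (Fin N) ℂ) :=
  Ideal.span {f | ∃ r : Fin d → Fin (d + N - 1), StrictMono r ∧
    f = ((catMatrix N d).submatrix r id).det}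

section catMatrix

variable {N d : ℕ}

theorem catMatrix_apply_of_eq {i : Fin (d + N - 1)} {j : Fin d} {k : Fin N}
    (h : (i : ℕ) = k + j) : catMatrix N d i j = X k := by
  rw [catMatrix, Matrix.of_apply, dif_pos (by omega)]
  exact congrArg X (Fin.ext (by simp only; omega))

theorem catMatrix_apply_of_forall_ne {i : Fin (d + N - 1)} {j : Fin d}
    (h : ∀ k : Fin N, (i : ℕ) ≠ k + j) : catMatrix N d i j = 0 := by
  rw [catMatrix, Matrix.of_apply, dif_neg]
  rintro ⟨hji, hlt⟩
  exact h ⟨_, hlt⟩ (by simp only; omega)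

theorem catMatrix_apply_mem (i : Fin (d + N - 1)) (j : Fin d) :
    catMatrix N d i j ∈ Ideal.span (Set.range X) := by
  rw [catMatrix, Matrix.of_apply]
  split
  · exact Ideal.subset_span ⟨_, rfl⟩
  · exact zero_mem _

theorem prod_catMatrix_eq_zero_or (r : Fin d → Fin (d + N - 1)) :
    ∏ j, catMatrix N d (r j) j = 0 ∨ ∃ c : Fin d → Fin N, (∀ j, (r j : ℕ) = c j + j) ∧
      ∏ j, catMatrix N d (r j) j = ∏ j, X (c j) := by
  by_cases h : ∀ j, ∃ k : Fin N, (r j : ℕ) = k + j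
  · choose c hc using h
    exact .inr ⟨c, hc, prod_congr rfl fun j _ ↦ catMatrix_apply_of_eq (hc j)⟩
  · push Not at h
    obtain ⟨j, hj⟩ := h
    exact .inl (prod_eq_zero (mem_univ j) (catMatrix_apply_of_forall_ne hj))

def monomialRows (e : Fin d → Fin N) (j : Fin d) : Fin (d + N - 1) :=
  ⟨e j + j, by omega⟩

theorem strictMono_monomialRows {e : Fin d → Fin N} (he : Monotone e) :
    StrictMono (monomialRows e) := fun a b hab ↦ by
  have : e a ≤ e b := he hab.le
  simp only [monomialRows, Fin.le_def, Fin.lt_def] at *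
  omega

theorem sum_val_sq_lt_of_perm {e : Fin d → Fin N} (he : Monotone e) {σ : Equiv.Perm (Fin d)}
    (hσ : σ ≠ 1) {c : Fin d → Fin N} (hc : ∀ j, (e (σ j) : ℕ) + σ j = c j + j) :
    ∑ j, (e j : ℕ) ^ 2 < ∑ j, (c j : ℕ) ^ 2 := by
  have hR : StrictMono fun j : Fin d ↦ ((e j : ℕ) : ℤ) + (j : ℕ) := fun a b hab ↦ by
    have : e a ≤ e b := he hab.le
    simp only [Fin.le_def, Fin.lt_def] at *
    omega
  have key := StrictMono.sum_sq_sub_lt_sum_sq_comp_perm_sub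
    (f := fun j : Fin d ↦ ((j : ℕ) : ℤ)) (fun a b hab ↦ by simpa using hab) hR hσ
  have hl : ∀ j : Fin d, ((e j : ℕ) : ℤ) + (j : ℕ) - (j : ℕ) = (e j : ℕ) := fun j ↦ by ring
  have hr : ∀ j : Fin d, ((e (σ j) : ℕ) : ℤ) + (σ j : ℕ) - (j : ℕ) = (c j : ℕ) := fun j ↦ by
    have := hc j
    omega
  simp only [hl, hr] at key
  exact_mod_cast key

theorem prod_X_mem_maxMinorIdeal_of_monotone {e : Fin d → Fin N} (he : Monotone e)
    (ih : ∀ c : Fin d → Fin N, ∑ j, (e j : ℕ) ^ 2 < ∑ j, (c j : ℕ) ^ 2 →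
      ∏ j, X (c j) ∈ maxMinorIdeal N d) :
    ∏ j, X (e j) ∈ maxMinorIdeal N d := by
  set A := (catMatrix N d).submatrix (monomialRows e) id
  have hdet : A.det ∈ maxMinorIdeal N d :=
    Ideal.subset_span ⟨_, strictMono_monomialRows he, rfl⟩
  have hdiag : ∏ j, A j j = ∏ j, X (e j) := prod_congr rfl fun j _ ↦ catMatrix_apply_of_eq rfl
  have hoff : ∑ σ ∈ univ.erase (1 : Equiv.Perm (Fin d)), σ.sign • ∏ j, A (σ j) j ∈
      maxMinorIdeal N d := by
    refine sum_mem fun σ hσ ↦ Submodule.smul_of_tower_mem _ _ ?_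
    rcases prod_catMatrix_eq_zero_or (monomialRows e ∘ σ) with h | ⟨c, hc, h⟩
    · exact h ▸ zero_mem _
    · exact h ▸ ih c (sum_val_sq_lt_of_perm he (ne_of_mem_erase hσ) hc)
  rw [Matrix.det_apply, ← add_sum_erase _ _ (mem_univ 1)] at hdet
  simpa only [Equiv.Perm.sign_one, one_smul, Equiv.Perm.one_apply, hdiag] using
    (Submodule.add_mem_iff_left _ hoff).1 hdet

theorem prod_X_mem_maxMinorIdeal (e : Fin d → Fin N) : ∏ j, X (e j) ∈ maxMinorIdeal N d := by
  induction hk : d * (N - 1) ^ 2 - ∑ j, (e j : ℕ) ^ 2 using Nat.strong_induction_on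
    generalizing e with
  | _ k ih =>
  rw [← Equiv.prod_comp (Tuple.sort e) (fun j ↦ X (e j))]
  refine prod_X_mem_maxMinorIdeal_of_monotone (Tuple.monotone_sort e) fun c hc ↦ ih _ ?_ c rfl
  rw [Equiv.sum_comp (Tuple.sort e) (fun j ↦ (e j : ℕ) ^ 2)] at hc
  have := sum_val_sq_le c
  omega

end catMatrix

theorem stmt_2_general (N d : ℕ) :
    Ideal.span {f : MvPolynomial (Fin N) ℂ |
        ∃ r : Fin d → Fin (d + N - 1), StrictMono r ∧
          f = ((catMatrix N d).submatrix r id).det} =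
      (Ideal.span (Set.range (X : Fin N → MvPolynomial (Fin N) ℂ))) ^ d := by
  refine le_antisymm (Ideal.span_le.2 ?_) ?_
  · rintro _ ⟨r, -, rfl⟩
    simpa only [Fintype.card_fin, SetLike.mem_coe] using
      Matrix.det_mem_pow_card (A := (catMatrix N d).submatrix r id) fun _ _ ↦
        catMatrix_apply_mem _ _
  · rw [Ideal.span, Submodule.span_pow, ← Ideal.span, Ideal.span_le]
    intro f hf
    obtain ⟨g, hg, rfl⟩ := Set.mem_pow_iff_prod.1 hf
    choose e he using hg
    obtain rfl : g = fun j ↦ X (e j) := funext fun j ↦ (he j).symm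
    exact prod_X_mem_maxMinorIdeal e

/-- For `d > 0`, the power `𝔪^d` of the maximal homogeneous ideal
of `ℂ[X₁,…,X_N]` equals the ideal generated by the maximal (`d×d`) minors of the
`(d+N-1) × d` matrix above. -/
theorem stmt_2 (N d : ℕ) (hd : 0 < d) :
    Ideal.span {f : MvPolynomial (Fin N) ℂ |
        ∃ r : Fin d → Fin (d + N - 1), StrictMono r ∧
          f = ((catMatrix N d).submatrix r id).det} =
      (Ideal.span (Set.range (X : Fin N → MvPolynomial (Fin N) ℂ))) ^ d :=
  stmt_2_general N d
end

section
/- Let $S = \mathbb{C}[X_{ij}]$ be the coordinate ring on generic $4 \times 4$ matrices, and let $I_3$ be the ideal of $3 \times 3$ minors. Then the inclusions $I_3^3 \subseteq (I_3^3)^{\mathrm{sat}} \subseteq I_3^{(3)}$ are both strict, where $(I_3^3)^{\mathrm{sat}} = I_3^3 : \mathfrak{m}^{\infty}$ is the saturation with respect to the maximal homogeneous ideal and $I_3^{(3)} = I_3^3 : I_2^{\infty}$ is the third symbolic power. -/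
open MvPolynomial

/-- The coordinate ring of generic `4×4` matrices over `ℂ`. -/
noncomputable abbrev S44 : Type := MvPolynomial (Fin 4 × Fin 4) ℂ

/-- The ideal of `p×p` minors of the generic `4×4` matrix. -/
noncomputable def minorsIdeal (p : ℕ) : Ideal S44 :=
  Ideal.span {f : S44 | ∃ r c : Fin p → Fin 4, StrictMono r ∧ StrictMono c ∧
    f = (Matrix.of fun a b : Fin p => X (r a, c b)).det}

/-- The saturation `I : J^∞ = ⋃_r (I : J^r)` of an ideal `I` with respect to `J`. -/
noncomputable def satIdeal (I J : Ideal S44) : Ideal S44 :=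
  ⨆ r : ℕ, Submodule.colon I ((J ^ r : Ideal S44) : Set S44)

/-!
Write `D = det X`. The entries of `adj X` are `3×3` minors, so the double adjugate identity
`adj (adj X) = D² • X` puts `D² 𝔪` into `I₃³`, although `D²` has degree `8 < 9` (the specialization
`X ↦ t • 1` certifies `D² ∉ I₃³`). The Desnanot–Jacobi identity puts `D I₂` into `I₃²`, so `D Δ`
lies in `I₃^{(3)}` for every `3×3` minor `Δ`. Under the specialization `X ↦ J + t • 1`, with `J`
the all-ones matrix of rank one, every `3×3` minor becomes divisible by `t²` and every variable a
unit modulo `t`, while `D Δ ↦ t⁵ (t + 4) (t + 3)`; hence `D Δ xᵢⱼʳ ∉ I₃³` for all `r`.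
-/

open Matrix Equiv
open scoped Polynomial

namespace Matrix

variable {R : Type*} [CommRing R]

theorem det_mem_pow_of_forall_mem {n : Type*} [Fintype n] [DecidableEq n] {J : Ideal R}
    {A : Matrix n n R} (hA : ∀ i j, A i j ∈ J) : A.det ∈ J ^ Fintype.card n := by
  rw [det_apply]
  refine Ideal.sum_mem _ fun σ _ => ?_
  rw [Units.smul_def, zsmul_eq_mul]
  refine Ideal.mul_mem_left _ _ ?_
  rw [← Finset.card_univ, ← Finset.prod_const]
  exact Ideal.prod_mem_prod fun i _ => hA _ _

theorem adjugate_mem_pow_of_forall_mem {n : ℕ} {J : Ideal R}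
    {A : Matrix (Fin (n + 1)) (Fin (n + 1)) R} (hA : ∀ i j, A i j ∈ J) (i j : Fin (n + 1)) :
    A.adjugate i j ∈ J ^ n := by
  rw [adjugate_fin_succ_eq_det_submatrix]
  have h := det_mem_pow_of_forall_mem (A := A.submatrix j.succAbove i.succAbove) fun _ _ => hA _ _
  rw [Fintype.card_fin] at h
  exact Ideal.mul_mem_left _ _ h

theorem pow_dvd_det_ones_add_smul {n : ℕ} (t : R) (G : Matrix (Fin (n + 1)) (Fin (n + 1)) R) :
    t ^ n ∣ (of (fun _ _ => 1) + t • G).det := by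
  set B : Matrix (Fin (n + 1)) (Fin (n + 1)) R :=
    of fun i j => if i = 0 then 1 + t * G 0 j else G i j - G 0 j
  have hrow : (of (fun _ _ => 1) + t • G).det =
      (of fun i j => (if i = 0 then 1 else t) * B i j).det := by
    refine det_eq_of_forall_row_eq_smul_add_const (fun i => if i = 0 then 0 else 1) 0 (by simp) ?_
    intro i j
    by_cases hi : i = 0
    · subst hi; simp [B]
    · simp only [add_apply, of_apply, smul_apply, smul_eq_mul, hi, ↓reduceIte, B]
      ring
  rw [hrow, det_mul_column, Fin.prod_univ_succ]
  simp

theorem det_ones_add_smul_one_fin_three (t : R) :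
    (of (fun _ _ => 1) + t • (1 : Matrix (Fin 3) (Fin 3) R)).det = t ^ 2 * (t + 3) := by
  rw [det_fin_three]
  simp only [add_apply, of_apply, smul_apply, smul_eq_mul, one_apply_eq, one_apply_ne, ne_eq,
    Fin.reduceEq, not_false_eq_true, mul_one, mul_zero, add_zero]
  ring

theorem det_ones_add_smul_one_fin_four (t : R) :
    (of (fun _ _ => 1) + t • (1 : Matrix (Fin 4) (Fin 4) R)).det = t ^ 3 * (t + 4) := by
  rw [det_succ_row_zero]
  simp [Fin.sum_univ_succ, det_fin_three, one_apply, Fin.succAbove]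
  ring

theorem desnanot_jacobi_fin_four (A : Matrix (Fin 4) (Fin 4) R) :
    A.det * (A 0 0 * A 1 1 - A 0 1 * A 1 0) =
      (A.submatrix (Fin.succAbove 2) (Fin.succAbove 2)).det *
          (A.submatrix (Fin.succAbove 3) (Fin.succAbove 3)).det -
        (A.submatrix (Fin.succAbove 2) (Fin.succAbove 3)).det *
          (A.submatrix (Fin.succAbove 3) (Fin.succAbove 2)).det := by
  rw [det_succ_row_zero]
  simp [Fin.sum_univ_succ, det_fin_three, Fin.succAbove]
  ring

end Matrix

theorem Polynomial.X_pow_mul_notMem_span_X_pow_succ {R : Type*} [CommRing R] [IsDomain R]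
    {q : R[X]} (hq : q.eval 0 ≠ 0) (k : ℕ) :
    Polynomial.X ^ k * q ∉ Ideal.span {(Polynomial.X : R[X]) ^ (k + 1)} := by
  rw [Ideal.mem_span_singleton, pow_succ, mul_dvd_mul_iff_left (pow_ne_zero _ X_ne_zero),
    X_dvd_iff, coeff_zero_eq_eval_zero]
  exact hq

theorem exists_perm_apply_zero_apply_one {n : ℕ} {a b : Fin (n + 2)} (hab : a < b) :
    ∃ σ : Perm (Fin (n + 2)), σ 0 = a ∧ σ 1 = b := by
  have hb0 : b ≠ 0 := (Fin.zero_le a).trans_lt hab |>.ne'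
  refine ⟨swap 0 a * swap 1 b, ?_, ?_⟩
  · simp [swap_apply_of_ne_of_ne (Fin.zero_ne_one) hb0.symm]
  · simp [swap_apply_of_ne_of_ne hb0 hab.ne']

noncomputable abbrev genericMatrix : Matrix (Fin 4) (Fin 4) S44 := mvPolynomialX (Fin 4) (Fin 4) ℂ

theorem det_submatrix_mem_minorsIdeal {p : ℕ} (r c : Fin p → Fin 4) :
    (genericMatrix.submatrix r c).det ∈ minorsIdeal p := by
  by_cases hr : Function.Injective r
  swap
  · obtain ⟨a, b, hrab, hab⟩ := Function.not_injective_iff.mp hr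
    rw [det_zero_of_row_eq hab (by ext; simp [hrab])]
    exact zero_mem _
  by_cases hc : Function.Injective c
  swap
  · obtain ⟨a, b, hcab, hab⟩ := Function.not_injective_iff.mp hc
    rw [det_zero_of_column_eq hab (by intro; simp [hcab])]
    exact zero_mem _
  set σ := Tuple.sort r
  set τ := Tuple.sort c
  have hσ : StrictMono (r ∘ σ) :=
    (Tuple.monotone_sort r).strictMono_of_injective (hr.comp σ.injective)
  have hτ : StrictMono (c ∘ τ) :=
    (Tuple.monotone_sort c).strictMono_of_injective (hc.comp τ.injective)
  have hsub : genericMatrix.submatrix r c =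
      ((genericMatrix.submatrix (r ∘ σ) (c ∘ τ)).submatrix σ.symm id).submatrix id τ.symm := by
    ext; simp
  rw [hsub, det_permute', det_permute]
  exact Ideal.mul_mem_left _ _ <| Ideal.mul_mem_left _ _ <|
    Ideal.subset_span ⟨_, _, hσ, hτ, rfl⟩

section Specialization

variable {R : Type*} [CommRing R] [Algebra ℂ R] (B : Matrix (Fin 4) (Fin 4) R)

theorem aeval_det_submatrix_genericMatrix {p : ℕ} (r c : Fin p → Fin 4) :
    aeval (fun q : Fin 4 × Fin 4 => B q.1 q.2) (genericMatrix.submatrix r c).det =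
      (B.submatrix r c).det := by
  rw [AlgHom.map_det, AlgHom.mapMatrix_apply, ← submatrix_map]
  congr 2
  exact mvPolynomialX_mapMatrix_aeval ℂ B

theorem aeval_det_genericMatrix :
    aeval (fun q : Fin 4 × Fin 4 => B q.1 q.2) genericMatrix.det = B.det :=
  aeval_det_submatrix_genericMatrix B id id

theorem aeval_mem_pow_of_mem_minorsIdeal_pow {p n : ℕ} {K : Ideal R}
    (hK : ∀ r c : Fin p → Fin 4, (B.submatrix r c).det ∈ K) {f : S44}
    (hf : f ∈ minorsIdeal p ^ n) : aeval (fun q : Fin 4 × Fin 4 => B q.1 q.2) f ∈ K ^ n := by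
  have hle : (minorsIdeal p).map (aeval fun q : Fin 4 × Fin 4 => B q.1 q.2) ≤ K := by
    rw [minorsIdeal, Ideal.map_span, Ideal.span_le]
    rintro _ ⟨_, ⟨r, c, -, -, rfl⟩, rfl⟩
    show aeval _ (genericMatrix.submatrix r c).det ∈ K
    rw [aeval_det_submatrix_genericMatrix]
    exact hK r c
  have h := Ideal.mem_map_of_mem (aeval fun q : Fin 4 × Fin 4 => B q.1 q.2) hf
  rw [Ideal.map_pow] at h
  exact Ideal.pow_right_mono hle n h

end Specialization

theorem mem_satIdeal_iff {I J : Ideal S44} {f : S44} :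
    f ∈ satIdeal I J ↔ ∃ r : ℕ, ∀ g ∈ J ^ r, f * g ∈ I := by
  have hdir : Directed (· ≤ ·) fun r : ℕ => Submodule.colon I ((J ^ r : Ideal S44) : Set S44) :=
    Monotone.directed_le fun _ _ hrs =>
      Submodule.colon_mono le_rfl (SetLike.coe_subset_coe.mpr (Ideal.pow_le_pow_right hrs))
  simp only [satIdeal, Submodule.mem_iSup_of_directed _ hdir, Submodule.mem_colon, smul_eq_mul,
    SetLike.mem_coe]

theorem mem_satIdeal_span_of_forall_mul_mem {I : Ideal S44} {s : Set S44} {f : S44}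
    (h : ∀ g ∈ s, f * g ∈ I) : f ∈ satIdeal I (Ideal.span s) := by
  refine mem_satIdeal_iff.2 ⟨1, fun g hg => ?_⟩
  rw [pow_one] at hg
  have hf : f ∈ I.colon s := Submodule.mem_colon.2 h
  rw [← Ideal.colon_span] at hf
  exact Submodule.mem_colon.1 hf g hg

theorem le_satIdeal (I J : Ideal S44) : I ≤ satIdeal I J :=
  fun _ hf => mem_satIdeal_iff.2 ⟨0, fun g _ => I.mul_mem_right g hf⟩

theorem satIdeal_anti {I J J' : Ideal S44} (hJ : J ≤ J') : satIdeal I J' ≤ satIdeal I J :=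
  iSup_mono fun r =>
    Submodule.colon_mono le_rfl (SetLike.coe_subset_coe.mpr (Ideal.pow_right_mono hJ r))

theorem X_mem_minorsIdeal_one (i j : Fin 4) : X (i, j) ∈ minorsIdeal 1 :=
  Ideal.subset_span ⟨fun _ => i, fun _ => j, Subsingleton.strictMono _, Subsingleton.strictMono _,
    by simp [det_unique]⟩

theorem minorsIdeal_two_le_one : minorsIdeal 2 ≤ minorsIdeal 1 := by
  rw [minorsIdeal, Ideal.span_le]
  rintro _ ⟨r, c, -, -, rfl⟩
  have h := det_mem_pow_of_forall_mem (A := Matrix.of fun a b : Fin 2 => (X (r a, c b) : S44))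
    fun a b => X_mem_minorsIdeal_one (r a) (c b)
  exact Ideal.pow_le_self two_ne_zero h

theorem adjugate_genericMatrix_mem_minorsIdeal (i j : Fin 4) :
    genericMatrix.adjugate i j ∈ minorsIdeal 3 := by
  rw [adjugate_fin_succ_eq_det_submatrix]
  exact Ideal.mul_mem_left _ _ (det_submatrix_mem_minorsIdeal _ _)

theorem det_sq_mul_X_mem_minorsIdeal_pow (i j : Fin 4) :
    genericMatrix.det ^ 2 * X (i, j) ∈ minorsIdeal 3 ^ 3 := by
  have h := adjugate_mem_pow_of_forall_mem adjugate_genericMatrix_mem_minorsIdeal i j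
  rw [adjugate_adjugate _ (by simp)] at h
  simpa using h

theorem det_sq_mem_satIdeal :
    genericMatrix.det ^ 2 ∈ satIdeal (minorsIdeal 3 ^ 3) (minorsIdeal 1) := by
  refine mem_satIdeal_span_of_forall_mul_mem ?_
  rintro _ ⟨r, c, -, -, rfl⟩
  rw [det_unique (of fun a b : Fin 1 => (X (r a, c b) : S44))]
  exact det_sq_mul_X_mem_minorsIdeal_pow _ _

theorem det_sq_notMem : genericMatrix.det ^ 2 ∉ minorsIdeal 3 ^ 3 := by
  set B : Matrix (Fin 4) (Fin 4) ℂ[X] := (Polynomial.X : ℂ[X]) • 1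
  have hminor : ∀ r c : Fin 3 → Fin 4, (B.submatrix r c).det ∈ Ideal.span {Polynomial.X ^ 3} := by
    intro r c
    have hsub : B.submatrix r c =
        (Polynomial.X : ℂ[X]) • (1 : Matrix (Fin 4) (Fin 4) ℂ[X]).submatrix r c := rfl
    rw [hsub, det_smul, Fintype.card_fin]
    exact Ideal.mul_mem_right _ _ (Ideal.mem_span_singleton_self _)
  intro h
  have := aeval_mem_pow_of_mem_minorsIdeal_pow B hminor h
  rw [Ideal.span_singleton_pow, map_pow, aeval_det_genericMatrix, det_smul, det_one,
    Fintype.card_fin, mul_one, ← pow_mul, ← pow_mul] at this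
  exact Polynomial.X_pow_mul_notMem_span_X_pow_succ (q := (1 : ℂ[X])) (by simp) 8
    (by simpa using this)

theorem det_mul_det_submatrix_fin_two_mem {r c : Fin 2 → Fin 4} (hr : StrictMono r)
    (hc : StrictMono c) :
    genericMatrix.det * (genericMatrix.submatrix r c).det ∈ minorsIdeal 3 ^ 2 := by
  -- permute rows and columns so that the `2×2` minor sits in the corner used by Desnanot–Jacobi
  obtain ⟨σ, hσ0, hσ1⟩ := exists_perm_apply_zero_apply_one (hr Fin.zero_lt_one)
  obtain ⟨τ, hτ0, hτ1⟩ := exists_perm_apply_zero_apply_one (hc Fin.zero_lt_one)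
  set A := genericMatrix.submatrix σ τ
  set ε : S44 := (((Perm.sign τ * Perm.sign σ : ℤˣ) : ℤ) : S44)
  have hε : ε * ε = 1 := by
    simp only [ε, ← Int.cast_mul, ← Units.val_mul, Int.units_mul_self, Units.val_one, Int.cast_one]
  have hA : A.det = ε * genericMatrix.det := by
    have : A = (genericMatrix.submatrix σ id).submatrix id τ := rfl
    rw [this, det_permute', det_permute]
    simp only [Units.val_mul, Int.cast_mul, ε]
    ring
  have hminor : (genericMatrix.submatrix r c).det = A 0 0 * A 1 1 - A 0 1 * A 1 0 := by
    simp [A, det_fin_two, hσ0, hσ1, hτ0, hτ1]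
  have hsub : ∀ i j : Fin 4, (A.submatrix i.succAbove j.succAbove).det ∈ minorsIdeal 3 :=
    fun i j => det_submatrix_mem_minorsIdeal (σ ∘ i.succAbove) (τ ∘ j.succAbove)
  have hdet : genericMatrix.det = ε * A.det := by rw [hA, ← mul_assoc, hε, one_mul]
  rw [hminor, hdet, mul_assoc, desnanot_jacobi_fin_four, pow_two]
  exact Ideal.mul_mem_left _ _ <| sub_mem (Ideal.mul_mem_mul (hsub 2 2) (hsub 3 3))
    (Ideal.mul_mem_mul (hsub 2 3) (hsub 3 2))

theorem det_mul_mem_satIdeal {f : S44} (hf : f ∈ minorsIdeal 3) :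
    genericMatrix.det * f ∈ satIdeal (minorsIdeal 3 ^ 3) (minorsIdeal 2) := by
  refine mem_satIdeal_span_of_forall_mul_mem ?_
  rintro _ ⟨r, c, hr, hc, rfl⟩
  rw [mul_right_comm, pow_succ]
  exact Ideal.mul_mem_mul (det_mul_det_submatrix_fin_two_mem hr hc) hf

theorem det_mul_minor_notMem_satIdeal :
    genericMatrix.det * (genericMatrix.submatrix Fin.castSucc Fin.castSucc).det ∉
      satIdeal (minorsIdeal 3 ^ 3) (minorsIdeal 1) := by
  set B : Matrix (Fin 4) (Fin 4) ℂ[X] := of (fun _ _ => 1) + (Polynomial.X : ℂ[X]) • 1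
  have hminor : ∀ r c : Fin 3 → Fin 4, (B.submatrix r c).det ∈ Ideal.span {Polynomial.X ^ 2} :=
    fun r c => Ideal.mem_span_singleton.2 <|
      pow_dvd_det_ones_add_smul Polynomial.X ((1 : Matrix (Fin 4) (Fin 4) ℂ[X]).submatrix r c)
  have hB : B.submatrix Fin.castSucc Fin.castSucc =
      of (fun _ _ => 1) + (Polynomial.X : ℂ[X]) • (1 : Matrix (Fin 3) (Fin 3) ℂ[X]) := by
    rw [← submatrix_one _ (Fin.castSucc_injective 3)]
    rfl
  intro h
  obtain ⟨k, hk⟩ := mem_satIdeal_iff.1 h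
  have := aeval_mem_pow_of_mem_minorsIdeal_pow B hminor
    (hk _ (Ideal.pow_mem_pow (X_mem_minorsIdeal_one 0 0) k))
  rw [Ideal.span_singleton_pow, ← pow_mul, map_mul, map_mul, map_pow, aeval_det_genericMatrix,
    aeval_det_submatrix_genericMatrix, hB, aeval_X, det_ones_add_smul_one_fin_four,
    det_ones_add_smul_one_fin_three] at this
  refine Polynomial.X_pow_mul_notMem_span_X_pow_succ
    (q := ((Polynomial.X : ℂ[X]) + 4) * (Polynomial.X + 3) * (1 + Polynomial.X) ^ k) ?_ 5 ?_
  · norm_num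
  · convert this using 1
    simp only [Matrix.add_apply, of_apply, Matrix.smul_apply, one_apply_eq, smul_eq_mul, mul_one, B]
    ring

/-- For the ideal `I₃` of `3×3` minors of a generic `4×4` matrix,
the inclusions `I₃³ ⊆ (I₃³)^{sat} ⊆ I₃^{(3)}` are strict, where
`(I₃³)^{sat} = I₃³ : 𝔪^∞` (`𝔪` the ideal of all variables, i.e. of `1×1` minors)
and `I₃^{(3)} = I₃³ : I₂^∞`. -/
theorem stmt_17 :
    minorsIdeal 3 ^ 3 < satIdeal (minorsIdeal 3 ^ 3) (minorsIdeal 1) ∧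
    satIdeal (minorsIdeal 3 ^ 3) (minorsIdeal 1) <
      satIdeal (minorsIdeal 3 ^ 3) (minorsIdeal 2) := by
  refine ⟨SetLike.lt_iff_le_and_exists.2 ⟨le_satIdeal _ _, _, det_sq_mem_satIdeal, det_sq_notMem⟩,
    SetLike.lt_iff_le_and_exists.2 ⟨satIdeal_anti minorsIdeal_two_le_one, _, ?_,
      det_mul_minor_notMem_satIdeal⟩⟩
  exact det_mul_mem_satIdeal (det_submatrix_mem_minorsIdeal _ _)
end
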